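/- arXiv:0808.1822 — 2 statements merged into one kernel-verified Lean document; each statement's English description precedes it below -/
import Mathlib

section
/- Let A ⊆ ℝ^n be a measurable set avoiding distances d_1,…,d_N, with d = max_k d_k, and let ε > 0. Then there exists a periodic measurable set B ⊆ ℝ^n (invariant under the lattice 2Tℤ^n for some T > 0) which avoids the distances d_1,…,d_N and satisfies δ̄(B) ≥ δ̄(A) − ε. -/
open MeasureTheory Filter Real

noncomputable def besselJ (α : ℝ) (t : ℝ) : ℝ :=
  ∑' k : ℕ, ((-1 : ℝ) ^ k / (k.factorial * Real.Gamma (k + α + 1))) * (t / 2) ^ (2 * (k : ℝ) + α)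

noncomputable def Omega (n : ℕ) (t : ℝ) : ℝ :=
  if t = 0 then 1
  else Real.Gamma (n / 2 : ℝ) * (2 / t) ^ (((n : ℝ) - 2) / 2) * besselJ (((n : ℝ) - 2) / 2) t

noncomputable def upperDensity {n : ℕ} (A : Set (EuclideanSpace ℝ (Fin n))) : ℝ :=
  Filter.limsup
    (fun T : ℝ => (volume (A ∩ {x | ∀ i, |x i| ≤ T})).toReal / (2 * T) ^ n)
    Filter.atTop

def AvoidsDistance {n : ℕ} (A : Set (EuclideanSpace ℝ (Fin n))) (d : ℝ) : Prop :=
  ∀ x ∈ A, ∀ y ∈ A, dist x y ≠ d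

/-!
Cut `A` down to the cube `[-S, S]^n` and repeat the piece along the lattice `2Tℤ^n`, where
`T = S + D` and `2D` exceeds every `d k`. Points in different copies differ by at least `2D` in one
coordinate, so the periodic set still avoids every `d k`. On the cubes `[-(2m+1)T, (2m+1)T]^n` it
contains `(2m+1)^n` disjoint copies, so its upper density is at least
`vol(A ∩ [-S, S]^n) / (2T)^n`, the density of `A` at scale `S` times `(S / T)^n`. Taking `S` large
with that density close to `δ̄(A)` and `(S / (S + D))^n` close to `1` gives the bound.
-/

open Pointwise Function Topology

section Periodize

variable {ι : Type*}

def cube (ι : Type*) (R : ℝ) : Set (EuclideanSpace ℝ ι) := {x | ∀ i, |x i| ≤ R}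

lemma measurableSet_cube [Fintype ι] (R : ℝ) : MeasurableSet (cube ι R) := by
  simp only [cube, Set.ofPred_forall]
  exact .iInter fun i => measurableSet_le (by fun_prop) measurable_const

lemma volume_cube [Fintype ι] (R : ℝ) :
    volume (cube ι R) = ENNReal.ofReal (2 * R) ^ Fintype.card ι := by
  have hpre : cube ι R
      = (MeasurableEquiv.toLp 2 (ι → ℝ)).symm ⁻¹' Set.univ.pi fun _ => Set.Icc (-R) R := by
    ext x
    simp [cube, abs_le, Pi.le_def, forall_and]
  rw [hpre, (EuclideanSpace.volume_preserving_symm_measurableEquiv_toLp ι).measure_preimage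
    (MeasurableSet.univ_pi fun _ => measurableSet_Icc).nullMeasurableSet, volume_pi_pi]
  simp [Real.volume_Icc, two_mul]

lemma volume_cube_ne_top [Fintype ι] (R : ℝ) : volume (cube ι R) ≠ ⊤ := by
  rw [volume_cube]
  exact ENNReal.pow_ne_top ENNReal.ofReal_ne_top

lemma volume_real_cube [Fintype ι] {R : ℝ} (hR : 0 ≤ R) :
    (volume (cube ι R)).toReal = (2 * R) ^ Fintype.card ι := by
  rw [volume_cube, ENNReal.toReal_pow, ENNReal.toReal_ofReal (by positivity)]

def latticeShift (T : ℝ) : (ι → ℤ) →+ EuclideanSpace ℝ ι where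
  toFun v := WithLp.toLp 2 fun i => 2 * T * v i
  map_zero' := by ext; simp
  map_add' v w := by ext; simp; ring

@[simp]
lemma latticeShift_apply (T : ℝ) (v : ι → ℤ) (i : ι) :
    latticeShift T v i = 2 * T * v i :=
  rfl

def periodize (T : ℝ) (C : Set (EuclideanSpace ℝ ι)) : Set (EuclideanSpace ℝ ι) :=
  ⋃ v, latticeShift (ι := ι) T v +ᵥ C

variable {T S : ℝ} {C : Set (EuclideanSpace ℝ ι)}

lemma add_latticeShift_mem_periodize_iff (u : ι → ℤ) (x : EuclideanSpace ℝ ι) :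
    x + latticeShift T u ∈ periodize T C ↔ x ∈ periodize T C := by
  simp only [periodize, Set.mem_iUnion, Set.mem_vadd_set_iff_neg_vadd_mem, vadd_eq_add]
  refine (Equiv.subRight u).exists_congr fun _ => ?_
  simp only [Equiv.subRight_apply, map_sub]
  abel_nf

lemma MeasurableSet.periodize [Fintype ι] (hC : MeasurableSet C) (T : ℝ) :
    MeasurableSet (periodize T C) :=
  .iUnion fun _ => hC.const_vadd _

lemma mem_latticeShift_vadd_cube {v : ι → ℤ} {x : EuclideanSpace ℝ ι} :
    x ∈ latticeShift T v +ᵥ cube ι S ↔ ∀ i, |x i - 2 * T * v i| ≤ S := by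
  simp [Set.mem_vadd_set_iff_neg_vadd_mem, cube, neg_add_eq_sub]

lemma two_mul_sub_le_dist_of_mem_vadd_cube [Fintype ι] (hT : 0 ≤ T) {v w : ι → ℤ}
    (hvw : v ≠ w) {x y : EuclideanSpace ℝ ι} (hx : x ∈ latticeShift T v +ᵥ cube ι S)
    (hy : y ∈ latticeShift T w +ᵥ cube ι S) : 2 * (T - S) ≤ dist x y := by
  obtain ⟨i, hi⟩ := Function.ne_iff.mp hvw
  have hx := mem_latticeShift_vadd_cube.mp hx i
  have hy := mem_latticeShift_vadd_cube.mp hy i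
  have hgap : 2 * T ≤ |2 * T * v i - 2 * T * w i| := by
    rw [← mul_sub, abs_mul, abs_of_nonneg (by positivity : (0 : ℝ) ≤ 2 * T)]
    refine le_mul_of_one_le_right (by positivity : (0 : ℝ) ≤ 2 * T) ?_
    exact_mod_cast Int.one_le_abs (sub_ne_zero.mpr hi)
  have htri : |2 * T * v i - 2 * T * w i|
      ≤ |x i - 2 * T * v i| + |x i - y i| + |y i - 2 * T * w i| := by
    have hsplit : 2 * T * v i - 2 * T * w i
        = -(x i - 2 * T * v i) + (x i - y i) + (y i - 2 * T * w i) := by ring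
    simpa only [hsplit, abs_neg] using abs_add_three (-(x i - 2 * T * v i)) (x i - y i) _
  have hcoord : |x i - y i| ≤ dist x y := by
    simpa [Real.dist_eq] using PiLp.dist_apply_le x y i
  linarith

lemma pairwise_disjoint_latticeShift_vadd [Fintype ι] (hCS : C ⊆ cube ι S) (hT : 0 ≤ T)
    (hST : S < T) : Pairwise (Disjoint on fun v : ι → ℤ => latticeShift T v +ᵥ C) := by
  intro v w hvw
  rw [Function.onFun, Set.disjoint_left]
  intro x hxv hxw
  have := two_mul_sub_le_dist_of_mem_vadd_cube hT hvw (Set.vadd_set_mono hCS hxv)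
    (Set.vadd_set_mono hCS hxw)
  rw [dist_self] at this
  linarith

lemma le_volume_periodize_inter_cube [Fintype ι] (hC : MeasurableSet C) (hCS : C ⊆ cube ι S)
    (hT : 0 ≤ T) (hST : S < T) (m : ℕ) :
    (2 * m + 1) ^ Fintype.card ι * volume C
      ≤ volume (periodize T C ∩ cube ι ((2 * m + 1) * T)) := by
  classical
  set box : Finset (ι → ℤ) := Fintype.piFinset fun _ => Finset.Icc (-(m : ℤ)) m
  have hcard : (box.card : ENNReal) = (2 * m + 1) ^ Fintype.card ι := by
    have hIcc : ((m : ℤ) + 1 + m).toNat = 2 * m + 1 := by omega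
    simp [box, hIcc]
  have hsub :
      ⋃ v ∈ box, latticeShift T v +ᵥ C ⊆ periodize T C ∩ cube ι ((2 * m + 1) * T) := by
    simp only [Set.iUnion_subset_iff]
    intro v hv x hx
    refine ⟨Set.mem_iUnion.mpr ⟨v, hx⟩, fun i => ?_⟩
    have hxi := mem_latticeShift_vadd_cube.mp (Set.vadd_set_mono hCS hx) i
    have hvi : |(v i : ℝ)| ≤ m := by
      have := Fintype.mem_piFinset.mp hv i
      rw [Finset.mem_Icc] at this
      exact_mod_cast abs_le.mpr this
    have htri := abs_add_le (x i - 2 * T * v i) (2 * T * v i)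
    rw [sub_add_cancel, abs_mul, abs_of_nonneg (by positivity : (0 : ℝ) ≤ 2 * T)] at htri
    nlinarith
  calc (2 * m + 1) ^ Fintype.card ι * volume C
        = ∑ v ∈ box, volume (latticeShift T v +ᵥ C) := by
        simp [measure_vadd, ← hcard]
    _ = volume (⋃ v ∈ box, latticeShift T v +ᵥ C) :=
        (measure_biUnion_finset ((pairwise_disjoint_latticeShift_vadd hCS hT hST).set_pairwise _)
          fun _ _ => hC.const_vadd _).symm
    _ ≤ _ := measure_mono hsub

end Periodize

lemma tendsto_div_add_const_atTop (D : ℝ) :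
    Tendsto (fun S : ℝ => S / (S + D)) atTop (𝓝 1) := by
  have h : Tendsto (fun S : ℝ => (1 + D / S)⁻¹) atTop (𝓝 1) := by
    simpa using (tendsto_const_nhds.add (tendsto_const_nhds.div_atTop tendsto_id)).inv₀
      (by norm_num : (1 : ℝ) + 0 ≠ 0)
  refine h.congr' ((eventually_gt_atTop 0).mono fun S hS => ?_)
  rw [one_add_div hS.ne', inv_div]

section Density


variable {n : ℕ}

lemma AvoidsDistance.mono {A B : Set (EuclideanSpace ℝ (Fin n))} {r : ℝ}
    (hA : AvoidsDistance A r) (hBA : B ⊆ A) : AvoidsDistance B r :=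
  fun x hx y hy => hA x (hBA hx) y (hBA hy)

lemma AvoidsDistance.periodize {C : Set (EuclideanSpace ℝ (Fin n))} {r S T : ℝ}
    (hC : AvoidsDistance C r) (hCS : C ⊆ cube (Fin n) S) (hT : 0 ≤ T) (hr : r < 2 * (T - S)) :
    AvoidsDistance (periodize T C) r := by
  intro x hx y hy hxy
  obtain ⟨v, hxv⟩ := Set.mem_iUnion.mp hx
  obtain ⟨w, hyw⟩ := Set.mem_iUnion.mp hy
  by_cases hvw : v = w
  · subst hvw
    obtain ⟨a, ha, rfl⟩ := hxv
    obtain ⟨b, hb, rfl⟩ := hyw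
    exact hC a ha b hb (by rwa [dist_vadd_cancel_left] at hxy)
  · have := two_mul_sub_le_dist_of_mem_vadd_cube hT hvw (Set.vadd_set_mono hCS hxv)
      (Set.vadd_set_mono hCS hyw)
    linarith

noncomputable def densityRatio (A : Set (EuclideanSpace ℝ (Fin n))) (R : ℝ) : ℝ :=
  (volume (A ∩ cube (Fin n) R)).toReal / (2 * R) ^ n

lemma upperDensity_eq_limsup_densityRatio (A : Set (EuclideanSpace ℝ (Fin n))) :
    upperDensity A = limsup (densityRatio A) atTop :=
  rfl

lemma densityRatio_mul_div_pow (A : Set (EuclideanSpace ℝ (Fin n))) {S : ℝ} (hS : S ≠ 0)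
    (T : ℝ) :
    densityRatio A S * (S / T) ^ n = (volume (A ∩ cube (Fin n) S)).toReal / (2 * T) ^ n := by
  rw [densityRatio, div_pow, mul_pow, mul_pow]
  field_simp

lemma densityRatio_nonneg (A : Set (EuclideanSpace ℝ (Fin n))) {R : ℝ} (hR : 0 ≤ R) :
    0 ≤ densityRatio A R := by
  unfold densityRatio
  positivity

lemma densityRatio_le_one (A : Set (EuclideanSpace ℝ (Fin n))) {R : ℝ} (hR : 0 ≤ R) :
    densityRatio A R ≤ 1 := by
  refine div_le_one_of_le₀ ?_ (by positivity)
  calc (volume (A ∩ cube (Fin n) R)).toReal ≤ (volume (cube (Fin n) R)).toReal :=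
        measureReal_mono Set.inter_subset_right (volume_cube_ne_top R)
    _ = (2 * R) ^ n := by simpa using volume_real_cube (ι := Fin n) hR

lemma isBoundedUnder_densityRatio (A : Set (EuclideanSpace ℝ (Fin n))) :
    IsBoundedUnder (· ≤ ·) atTop (densityRatio A) :=
  isBoundedUnder_of_eventually_le ((eventually_ge_atTop 0).mono fun _ => densityRatio_le_one A)

lemma isCoboundedUnder_densityRatio (A : Set (EuclideanSpace ℝ (Fin n))) :
    IsCoboundedUnder (· ≤ ·) atTop (densityRatio A) :=
  isCoboundedUnder_le_of_eventually_le atTop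
    ((eventually_ge_atTop 0).mono fun _ => densityRatio_nonneg A)

lemma le_upperDensity_periodize {C : Set (EuclideanSpace ℝ (Fin n))} {S T : ℝ}
    (hC : MeasurableSet C) (hCS : C ⊆ cube (Fin n) S) (hT : 0 < T) (hST : S < T) :
    (volume C).toReal / (2 * T) ^ n ≤ upperDensity (periodize T C) := by
  rw [upperDensity_eq_limsup_densityRatio]
  have hR : Tendsto (fun m : ℕ => (2 * m + 1) * T) atTop atTop :=
    ((tendsto_natCast_atTop_atTop.const_mul_atTop two_pos).atTop_add
      tendsto_const_nhds).atTop_mul_const hT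
  refine le_limsup_of_frequently_le (hR.frequently (.of_forall fun m => ?_))
    (isBoundedUnder_densityRatio _)
  have hvol := ENNReal.toReal_mono
    (ne_top_of_le_ne_top (volume_cube_ne_top _) (measure_mono Set.inter_subset_right))
    (le_volume_periodize_inter_cube hC hCS hT.le hST m)
  simp only [ENNReal.toReal_mul, ENNReal.toReal_pow, Fintype.card_fin] at hvol
  have hcoef : (2 * m + 1 : ENNReal).toReal = 2 * m + 1 := by
    exact_mod_cast ENNReal.toReal_natCast (2 * m + 1)
  rw [hcoef] at hvol
  calc (volume C).toReal / (2 * T) ^ n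
      = (2 * m + 1) ^ n * (volume C).toReal / (2 * ((2 * m + 1) * T)) ^ n := by
        rw [mul_left_comm, mul_pow (2 * (m : ℝ) + 1), mul_div_mul_left _ _ (by positivity)]
    _ ≤ densityRatio (periodize T C) ((2 * m + 1) * T) := by
        unfold densityRatio
        gcongr

end Density

theorem periodization_general (n N : ℕ) (d : Fin N → ℝ)
    (A : Set (EuclideanSpace ℝ (Fin n))) (hA : MeasurableSet A)
    (havoid : ∀ k, AvoidsDistance A (d k))
    (ε : ℝ) (hε : 0 < ε) :
    ∃ (B : Set (EuclideanSpace ℝ (Fin n))) (T : ℝ), 0 < T ∧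
      MeasurableSet B ∧
      (∀ v : Fin n → ℤ, ∀ x : EuclideanSpace ℝ (Fin n),
        x ∈ B ↔ (x + (show EuclideanSpace ℝ (Fin n) from WithLp.toLp 2 (fun i => 2 * T * (v i)))) ∈ B) ∧
      (∀ k, AvoidsDistance B (d k)) ∧
      upperDensity B ≥ upperDensity A - ε := by
  obtain ⟨D, hD, hdD⟩ : ∃ D : ℝ, 0 < D ∧ ∀ k, d k < 2 * D := by
    obtain ⟨M, hM⟩ := (Set.finite_range d).bddAbove
    exact ⟨max M 0 + 1, by positivity,
      fun k => by linarith [hM ⟨k, rfl⟩, le_max_left M 0, le_max_right M 0]⟩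
  have hclose : ∀ᶠ S in atTop, 0 < S ∧ 1 - ε / 2 ≤ (S / (S + D)) ^ n :=
    (eventually_gt_atTop 0).and (((tendsto_div_add_const_atTop D).pow n).eventually
      (eventually_ge_nhds (by rw [one_pow]; linarith)))
  have hdense : ∃ᶠ S in atTop, upperDensity A - ε / 2 < densityRatio A S :=
    frequently_lt_of_lt_limsup (isCoboundedUnder_densityRatio A)
      (by rw [← upperDensity_eq_limsup_densityRatio]; linarith)
  obtain ⟨S, ⟨hS, hSD⟩, hAS⟩ := (hclose.and_frequently hdense).exists
  set T := S + D
  set C := A ∩ cube (Fin n) S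
  have hC : MeasurableSet C := hA.inter (measurableSet_cube S)
  refine ⟨periodize T C, T, by positivity, hC.periodize T,
    fun v x => (add_latticeShift_mem_periodize_iff v x).symm,
    fun k => ((havoid k).mono Set.inter_subset_left).periodize Set.inter_subset_right
      (by positivity) (by linarith [hdD k]), ?_⟩
  have hA0 := densityRatio_nonneg A hS.le
  have hA1 := densityRatio_le_one A hS.le
  calc upperDensity A - ε ≤ densityRatio A S * (S / T) ^ n := by
        nlinarith [mul_le_mul_of_nonneg_left hSD hA0]
    _ = (volume C).toReal / (2 * T) ^ n := densityRatio_mul_div_pow A hS.ne' T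
    _ ≤ upperDensity (periodize T C) :=
        le_upperDensity_periodize hC Set.inter_subset_right (by positivity) (by linarith)

theorem periodization (n N : ℕ) (hn : 1 ≤ n) (d : Fin N → ℝ) (hd : ∀ k, 0 < d k)
    (A : Set (EuclideanSpace ℝ (Fin n))) (hA : MeasurableSet A)
    (havoid : ∀ k, AvoidsDistance A (d k))
    (ε : ℝ) (hε : 0 < ε) :
    ∃ (B : Set (EuclideanSpace ℝ (Fin n))) (T : ℝ), 0 < T ∧
      MeasurableSet B ∧
      (∀ v : Fin n → ℤ, ∀ x : EuclideanSpace ℝ (Fin n),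
        x ∈ B ↔ (x + (show EuclideanSpace ℝ (Fin n) from WithLp.toLp 2 (fun i => 2 * T * (v i)))) ∈ B) ∧
      (∀ k, AvoidsDistance B (d k)) ∧
      upperDensity B ≥ upperDensity A - ε :=
  periodization_general n N d A hA havoid ε hε
end

section
/- Fix n ≥ 2 and N ≥ 1, and set ε = 1/(N·2^{N+1}). Let t_0 > 0 satisfy Ω_n(t) > 1 − ε for all 0 ≤ t ≤ t_0, and let t_1 > t_0 satisfy |Ω_n(t)| < ε for all t ≥ t_1; set r = t_1/t_0. Then for any distances d_1,…,d_N > 0 with d_{i+1}/d_i > r for all i, and for every 1 ≤ j ≤ N and t ≥ 0: Σ_{i=j}^N (1/2^{N−i+1}) Ω_n(t d_i) ≥ −1/2^{N−j+2} − (N−j)ε. -/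
open MeasureTheory Filter Real

/-!
For `t ≥ 0`, `Ω_n(t) = ∑ₖ (-1)ᵏ (t²/4)ᵏ / (k! (n/2)ₖ)`. For `n = 2` this equals
`(1/π) ∫₀^π cos (t sin θ) dθ`; the three shifts `θ ± π/6`, `θ - π/2` turn `t sin θ` into the
pairwise differences of three reals `a, b, c`, and `3 + 2 ∑ cos (a - b) ≥ 0` then gives
`Ω₂ ≥ -1/2`.
For `n ≥ 3`, `Ω_n(t)` is the average of `Ω₂(t √(1 - u²))` against the probability density
`(n - 2) u^(n-3)` on `[0, 1]`, so `Ω_n ≥ -1/2` as well.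

The weighted sum is then bounded by downward induction on `j`. If `t dⱼ ≤ t₀`, the `j`-th term is
nearly its full weight and absorbs the inductive bound for the later terms; otherwise the ratio
condition pushes every later `t dᵢ` beyond `t₁`, where each term is at least `-ε`, while the `j`-th
term is at least `-1/2` times its weight.
-/

open Finset
open scoped Nat

theorem Real.Gamma_nat_add_eq_mul_prod (k : ℕ) {x : ℝ} (hx : 0 < x) :
    Gamma (k + x) = Gamma x * ∏ i ∈ range k, (x + i) := by
  induction k with
  | zero => simp
  | succ k ih =>
    rw [Nat.cast_succ, add_right_comm, Gamma_add_one (by positivity), ih, prod_range_succ]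
    ring

noncomputable def omegaCoeff (n k : ℕ) : ℝ :=
  ((k ! : ℝ) * ∏ i ∈ range k, ((n : ℝ) / 2 + i))⁻¹

noncomputable def omegaSeries (n : ℕ) (x : ℝ) : ℝ :=
  ∑' k : ℕ, (-1) ^ k * omegaCoeff n k * x ^ k

theorem omegaCoeff_nonneg (n k : ℕ) : 0 ≤ omegaCoeff n k := by
  unfold omegaCoeff; positivity

theorem omegaCoeff_le_inv_factorial {n : ℕ} (hn : 2 ≤ n) (k : ℕ) :
    omegaCoeff n k ≤ (k ! : ℝ)⁻¹ := by
  have hprod : 1 ≤ ∏ i ∈ range k, ((n : ℝ) / 2 + i) := by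
    have : (2 : ℝ) ≤ n := by exact_mod_cast hn
    exact one_le_prod fun i _ => by linarith [(i.cast_nonneg : (0 : ℝ) ≤ i)]
  exact inv_anti₀ (by positivity) (le_mul_of_one_le_right (by positivity) hprod)

theorem omegaCoeff_two (k : ℕ) : omegaCoeff 2 k = ((k ! : ℝ) ^ 2)⁻¹ := by
  have : ∏ i ∈ range k, ((2 : ℕ) / 2 + i : ℝ) = k ! := by
    rw [← prod_range_add_one_eq_factorial]; push_cast
    exact prod_congr rfl fun i _ => by ring
  rw [omegaCoeff, this, sq]

theorem Omega_eq_omegaSeries {n : ℕ} (hn : 1 ≤ n) {t : ℝ} (ht : 0 ≤ t) :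
    Omega n t = omegaSeries n (t ^ 2 / 4) := by
  rcases ht.eq_or_lt with rfl | ht
  · rw [Omega, if_pos rfl, omegaSeries, tsum_eq_single 0 fun k hk => by simp [hk]]
    simp [omegaCoeff]
  have hn2 : (0 : ℝ) < n / 2 := by positivity
  rw [Omega, if_neg ht.ne', besselJ, omegaSeries, ← tsum_mul_left]
  congr 1 with k
  set ν : ℝ := ((n : ℝ) - 2) / 2
  have hpow : (2 / t) ^ ν * (t / 2) ^ (2 * (k : ℝ) + ν) = (t ^ 2 / 4) ^ k := by
    rw [rpow_add (by positivity), mul_left_comm, ← mul_rpow (by positivity) (by positivity),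
      div_mul_div_cancel₀ (by positivity), div_self two_ne_zero, one_rpow, mul_one,
      rpow_mul (by positivity), rpow_ofNat, rpow_natCast]
    ring
  have hΓ : Gamma (k + ν + 1) = Gamma (n / 2) * ∏ i ∈ range k, ((n : ℝ) / 2 + i) := by
    rw [← Gamma_nat_add_eq_mul_prod k hn2]; congr 1; ring
  have : Gamma (n / 2) ≠ 0 := (Gamma_pos_of_pos hn2).ne'
  rw [omegaCoeff, hΓ, ← hpow]
  field_simp

theorem intervalIntegral_tsum_of_norm_le {f : ℕ → ℝ → ℝ} {M : ℕ → ℝ} {a b : ℝ}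
    (hf : ∀ k, Continuous (f k)) (hM : Summable M)
    (hfM : ∀ k, ∀ x ∈ Set.uIcc a b, ‖f k x‖ ≤ M k) :
    ∫ x in a..b, ∑' k, f k x = ∑' k, ∫ x in a..b, f k x := by
  let F : ℕ → C(ℝ, ℝ) := fun k => ⟨f k, hf k⟩
  refine (intervalIntegral.tsum_intervalIntegral_eq_of_summable_norm (f := F) ?_).symm
  refine hM.of_nonneg_of_le (fun _ => norm_nonneg _) fun k => ?_
  have hM0 : 0 ≤ M k := (norm_nonneg _).trans (hfM k a Set.left_mem_uIcc)
  exact (ContinuousMap.norm_le _ hM0).2 fun x => hfM k x x.2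

theorem continuous_omegaSeries {n : ℕ} (hn : 2 ≤ n) : Continuous (omegaSeries n) := by
  refine continuous_iff_continuousAt.2 fun x => ?_
  set R := |x| + 1
  have hbound : ∀ k, ∀ y ∈ Set.Icc (-R) R, ‖(-1) ^ k * omegaCoeff n k * y ^ k‖ ≤ R ^ k / k ! := by
    intro k y hy
    rw [norm_mul, norm_mul, norm_pow, norm_neg, norm_one, one_pow, one_mul, norm_pow,
      Real.norm_of_nonneg (omegaCoeff_nonneg n k), div_eq_inv_mul]
    exact mul_le_mul (omegaCoeff_le_inv_factorial hn k)
      (pow_le_pow_left₀ (norm_nonneg _) (abs_le.2 hy) k) (by positivity) (by positivity)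
  have hon := continuousOn_tsum (fun k => (continuous_const.mul (continuous_pow k)).continuousOn)
    (Real.summable_pow_div_factorial R) hbound
  exact hon.continuousAt (Icc_mem_nhds (by linarith [neg_abs_le x]) (by linarith [le_abs_self x]))

theorem prod_range_odd_div_even (k : ℕ) :
    ∏ i ∈ range k, (2 * (i : ℝ) + 1) / (2 * i + 2) = (2 * k)! / (4 ^ k * (k ! : ℝ) ^ 2) := by
  induction k with
  | zero => simp
  | succ k ih =>
    rw [prod_range_succ, ih, mul_add_one, Nat.factorial_succ, Nat.factorial_succ,
      Nat.factorial_succ]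
    push_cast
    field_simp
    ring

theorem integral_cos_mul_sin (u : ℝ) :
    ∫ θ in 0..π, cos (u * sin θ) = π * omegaSeries 2 (u ^ 2 / 4) := by
  have hbound : ∀ k, ∀ θ ∈ Set.uIcc 0 π,
      ‖(-1) ^ k * (u * sin θ) ^ (2 * k) / (2 * k)!‖ ≤ (u ^ 2) ^ k / k ! := by
    intro k θ _
    rw [norm_div, norm_mul, norm_pow, norm_neg, norm_one, one_pow, one_mul, pow_mul,
      norm_pow, Real.norm_of_nonneg (sq_nonneg _), RCLike.norm_natCast]
    refine div_le_div₀ (by positivity) (pow_le_pow_left₀ (sq_nonneg _) ?_ k) (by positivity)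
      (mod_cast Nat.factorial_le (by omega))
    rw [mul_pow]
    exact mul_le_of_le_one_right (sq_nonneg u) (sin_sq_le_one θ)
  have hterm : ∀ k, ∫ θ in 0..π, (-1) ^ k * (u * sin θ) ^ (2 * k) / (2 * k)! =
      π * ((-1) ^ k * omegaCoeff 2 k * (u ^ 2 / 4) ^ k) := by
    intro k
    have : ∀ θ, (-1) ^ k * (u * sin θ) ^ (2 * k) / (2 * k)! =
        (-1) ^ k * u ^ (2 * k) / (2 * k)! * sin θ ^ (2 * k) := fun θ => by ring
    simp_rw [this]
    rw [intervalIntegral.integral_const_mul, integral_sin_pow_even, prod_range_odd_div_even,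
      omegaCoeff_two, pow_mul, div_pow]
    field_simp
  simp_rw [cos_eq_tsum]
  rw [intervalIntegral_tsum_of_norm_le (fun k => by fun_prop)
    (Real.summable_pow_div_factorial _) hbound, omegaSeries, ← tsum_mul_left]
  exact tsum_congr hterm

theorem Function.Periodic.intervalIntegral_comp_add_right {f : ℝ → ℝ} {T : ℝ}
    (hf : Function.Periodic f T) (γ : ℝ) :
    ∫ x in 0..T, f (x + γ) = ∫ x in 0..T, f x := by
  rw [intervalIntegral.integral_comp_add_right, zero_add, add_comm T,
    hf.intervalIntegral_add_eq γ 0, zero_add]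

-- `|e^{ia} + e^{ib} + e^{ic}|² ≥ 0`
theorem three_add_two_mul_sum_cos_sub_nonneg (a b c : ℝ) :
    0 ≤ 3 + 2 * (cos (a - b) + cos (a - c) + cos (b - c)) := by
  simp only [cos_sub]
  nlinarith [sin_sq_add_cos_sq a, sin_sq_add_cos_sq b, sin_sq_add_cos_sq c,
    sq_nonneg (cos a + cos b + cos c), sq_nonneg (sin a + sin b + sin c)]

theorem neg_half_le_omegaSeries_two {x : ℝ} (hx : 0 ≤ x) : -(1 / 2) ≤ omegaSeries 2 x := by
  obtain ⟨u, rfl⟩ : ∃ u : ℝ, x = u ^ 2 / 4 := ⟨2 * √x, by rw [mul_pow, sq_sqrt hx]; ring⟩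
  set g : ℝ → ℝ := fun θ => cos (u * sin θ)
  have hg : Function.Periodic g π := fun θ => by simp only [g, sin_add_pi, mul_neg, cos_neg]
  have hgc : Continuous g := by fun_prop
  have hpoint : ∀ θ, 0 ≤ 3 + 2 * (g (θ + π / 6) + g (θ + -(π / 6)) + g (θ + -(π / 2))) := by
    intro θ
    set a := u * (√3 / 3 * sin θ)
    set b := u * (-(√3 / 6) * sin θ - 1 / 2 * cos θ)
    set c := u * (-(√3 / 6) * sin θ + 1 / 2 * cos θ)
    have hab : u * sin (θ + π / 6) = a - b := by
      rw [sin_add, cos_pi_div_six, sin_pi_div_six]; ring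
    have hac : u * sin (θ + -(π / 6)) = a - c := by
      rw [sin_add, cos_neg, sin_neg, cos_pi_div_six, sin_pi_div_six]; ring
    have hbc : u * sin (θ + -(π / 2)) = b - c := by
      rw [sin_add, cos_neg, sin_neg, cos_pi_div_two, sin_pi_div_two]; ring
    simp only [g, hab, hac, hbc]
    exact three_add_two_mul_sum_cos_sub_nonneg a b c
  have hshift : ∀ γ, IntervalIntegrable (fun θ => g (θ + γ)) volume 0 π :=
    fun γ => (hgc.comp (continuous_add_const γ)).intervalIntegrable _ _
  have hsum := intervalIntegral.integral_nonneg (μ := volume) pi_pos.le fun θ _ => hpoint θ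
  rw [intervalIntegral.integral_add intervalIntegrable_const
      ((((hshift _).add (hshift _)).add (hshift _)).const_mul 2),
    intervalIntegral.integral_const_mul, intervalIntegral.integral_add ((hshift _).add (hshift _))
      (hshift _), intervalIntegral.integral_add (hshift _) (hshift _),
    hg.intervalIntegral_comp_add_right, hg.intervalIntegral_comp_add_right,
    hg.intervalIntegral_comp_add_right, intervalIntegral.integral_const, integral_cos_mul_sin]
    at hsum
  simp only [sub_zero, smul_eq_mul] at hsum
  nlinarith [pi_pos]

theorem integral_pow_mul_one_sub_sq_pow_succ (c k : ℕ) :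
    (c + 2 * k + 3 : ℝ) * ∫ u in 0..1, u ^ c * (1 - u ^ 2) ^ (k + 1) =
      (2 * k + 2) * ∫ u in 0..1, u ^ c * (1 - u ^ 2) ^ k := by
  -- integrate the derivative of `u ^ (c + 1) * (1 - u ^ 2) ^ (k + 1)`, which vanishes at 0 and 1
  have hderiv : ∀ u : ℝ, HasDerivAt (fun u : ℝ => u ^ (c + 1) * (1 - u ^ 2) ^ (k + 1))
      ((c + 2 * k + 3) * (u ^ c * (1 - u ^ 2) ^ (k + 1)) -
        (2 * k + 2) * (u ^ c * (1 - u ^ 2) ^ k)) u := by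
    intro u
    refine ((hasDerivAt_pow (c + 1) u).fun_mul
      (((hasDerivAt_pow 2 u).const_sub 1).fun_pow (k + 1))).congr_deriv ?_
    simp only [Nat.add_sub_cancel, Nat.cast_add, Nat.cast_one, Nat.cast_ofNat]
    ring
  have hftc := intervalIntegral.integral_eq_sub_of_hasDerivAt (fun u _ => hderiv u)
    (Continuous.intervalIntegrable (by fun_prop) 0 1)
  rw [intervalIntegral.integral_sub (Continuous.intervalIntegrable (by fun_prop) 0 1)
      (Continuous.intervalIntegrable (by fun_prop) 0 1),
    intervalIntegral.integral_const_mul, intervalIntegral.integral_const_mul] at hftc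
  norm_num at hftc
  linarith

theorem integral_pow_mul_one_sub_sq_pow (c k : ℕ) :
    (c + 1) * (∏ i ∈ range k, ((c + 3 : ℝ) / 2 + i)) *
      ∫ u in 0..1, u ^ c * (1 - u ^ 2) ^ k = k ! := by
  induction k with
  | zero =>
    simp only [pow_zero, mul_one, integral_pow, prod_range_zero]
    field_simp
    simp
  | succ k ih =>
    rw [prod_range_succ, Nat.factorial_succ, Nat.cast_mul, ← ih]
    push_cast
    have h := integral_pow_mul_one_sub_sq_pow_succ c k
    linear_combination (((c : ℝ) + 1) * ∏ i ∈ range k, ((c + 3 : ℝ) / 2 + i)) / 2 * h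

theorem omegaSeries_eq_integral {n : ℕ} (hn : 3 ≤ n) (x : ℝ) :
    omegaSeries n x =
      ∫ u in 0..1, omegaSeries 2 (x * (1 - u ^ 2)) * ((n - 2) * u ^ (n - 3)) := by
  have hn' : ((n - 3 : ℕ) : ℝ) = n - 3 := by push_cast [Nat.cast_sub hn]; ring
  have hbound : ∀ k, ∀ u ∈ Set.uIcc (0 : ℝ) 1,
      ‖(-1) ^ k * omegaCoeff 2 k * (x * (1 - u ^ 2)) ^ k * ((n - 2) * u ^ (n - 3))‖ ≤
        (n - 2) * (|x| ^ k / k !) := by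
    intro k u hu
    rw [Set.uIcc_of_le zero_le_one] at hu
    have hn2 : (0 : ℝ) ≤ n - 2 := by linarith [(by exact_mod_cast hn : (3 : ℝ) ≤ n)]
    have h1u : |1 - u ^ 2| ≤ 1 := abs_le.2 ⟨by nlinarith [hu.1, hu.2], by nlinarith [sq_nonneg u]⟩
    have hu' : |u| ^ (n - 3) ≤ 1 := pow_le_one₀ (abs_nonneg u) (abs_le.2 ⟨by linarith [hu.1], hu.2⟩)
    rw [Real.norm_eq_abs, abs_mul, abs_mul, abs_mul, abs_mul, abs_pow, abs_neg, abs_one, one_pow,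
      one_mul, abs_pow, abs_mul, abs_pow, abs_of_nonneg hn2, abs_of_nonneg (omegaCoeff_nonneg 2 k),
      div_eq_mul_inv]
    have hc := omegaCoeff_le_inv_factorial le_rfl k
    have hxk : (|x| * |1 - u ^ 2|) ^ k ≤ |x| ^ k :=
      pow_le_pow_left₀ (by positivity) (mul_le_of_le_one_right (abs_nonneg x) h1u) k
    calc omegaCoeff 2 k * (|x| * |1 - u ^ 2|) ^ k * ((n - 2) * |u| ^ (n - 3))
        ≤ (k ! : ℝ)⁻¹ * |x| ^ k * ((n - 2) * 1) := by gcongr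
      _ = (n - 2) * (|x| ^ k * (k ! : ℝ)⁻¹) := by ring
  have hterm : ∀ k, ∫ u in 0..1, (-1) ^ k * omegaCoeff 2 k * (x * (1 - u ^ 2)) ^ k *
      ((n - 2) * u ^ (n - 3)) = (-1) ^ k * omegaCoeff n k * x ^ k := by
    intro k
    have hI := integral_pow_mul_one_sub_sq_pow (n - 3) k
    rw [hn', show ((n : ℝ) - 3 + 3) / 2 = n / 2 by ring, sub_add_eq_add_sub,
      show (n : ℝ) + 1 - 3 = n - 2 by ring] at hI
    have : ∀ u : ℝ, (-1) ^ k * omegaCoeff 2 k * (x * (1 - u ^ 2)) ^ k * ((n - 2) * u ^ (n - 3)) =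
        (-1) ^ k * omegaCoeff 2 k * x ^ k * (n - 2) * (u ^ (n - 3) * (1 - u ^ 2) ^ k) :=
      fun u => by rw [mul_pow]; ring
    have hprod : 0 < ∏ i ∈ range k, ((n : ℝ) / 2 + i) := prod_pos fun i _ => by positivity
    have hI' : (n - 2) * ∫ u in 0..1, u ^ (n - 3) * (1 - u ^ 2) ^ k =
        k ! / ∏ i ∈ range k, ((n : ℝ) / 2 + i) := by
      rw [eq_div_iff hprod.ne', ← hI]; ring
    simp_rw [this]
    rw [intervalIntegral.integral_const_mul, mul_assoc, hI', omegaCoeff_two, omegaCoeff]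
    field_simp
  simp_rw [omegaSeries, ← tsum_mul_right]
  rw [intervalIntegral_tsum_of_norm_le (fun k => by fun_prop)
    ((Real.summable_pow_div_factorial |x|).mul_left _) hbound]
  exact (tsum_congr hterm).symm

theorem neg_half_le_omegaSeries {n : ℕ} (hn : 2 ≤ n) {x : ℝ} (hx : 0 ≤ x) :
    -(1 / 2) ≤ omegaSeries n x := by
  rcases hn.eq_or_lt with rfl | hn
  · exact neg_half_le_omegaSeries_two hx
  have hn3 : (3 : ℝ) ≤ n := by exact_mod_cast hn
  set ρ : ℝ → ℝ := fun u => (n - 2) * u ^ (n - 3)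
  have hρ : ∫ u in 0..1, ρ u = 1 := by
    have : ((n - 3 : ℕ) : ℝ) + 1 = n - 2 := by push_cast [Nat.cast_sub hn]; ring
    have hn2 : (n : ℝ) - 2 ≠ 0 := by linarith
    simp only [ρ, intervalIntegral.integral_const_mul, integral_pow, this]
    field_simp
    simp
  have hle : ∀ u ∈ Set.Icc (0 : ℝ) 1, -(1 / 2) * ρ u ≤ omegaSeries 2 (x * (1 - u ^ 2)) * ρ u :=
    fun u hu => mul_le_mul_of_nonneg_right
      (neg_half_le_omegaSeries_two (mul_nonneg hx (by nlinarith [hu.1, hu.2])))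
      (mul_nonneg (by linarith) (pow_nonneg hu.1 _))
  have hρc : Continuous ρ := by fun_prop
  have hgc : Continuous fun u => omegaSeries 2 (x * (1 - u ^ 2)) * ρ u :=
    ((continuous_omegaSeries le_rfl).comp (by fun_prop)).mul hρc
  have hfc : Continuous fun u => -(1 / 2) * ρ u := continuous_const.mul hρc
  have hmono := intervalIntegral.integral_mono_on zero_le_one
    (hfc.intervalIntegrable (μ := volume) _ _) (hgc.intervalIntegrable _ _) hle
  rwa [intervalIntegral.integral_const_mul, hρ, mul_one, ← omegaSeries_eq_integral hn] at hmono

theorem neg_half_le_Omega {n : ℕ} (hn : 2 ≤ n) {t : ℝ} (ht : 0 ≤ t) : -(1 / 2) ≤ Omega n t := by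
  rw [Omega_eq_omegaSeries (by omega) ht]
  exact neg_half_le_omegaSeries hn (by positivity)

theorem neg_card_mul_le_sum_mul {ι : Type*} (s : Finset ι) {w x : ι → ℝ} {ε : ℝ} (hε : 0 ≤ ε)
    (hw : ∀ i ∈ s, 0 ≤ w i ∧ w i ≤ 1) (hx : ∀ i ∈ s, -ε ≤ x i) :
    -(#s * ε) ≤ ∑ i ∈ s, w i * x i := by
  have h := card_nsmul_le_sum s (fun i => w i * x i) (-ε) fun i hi => by
    nlinarith [hw i hi, hx i hi]
  rwa [nsmul_eq_mul, mul_neg] at h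

section Lacunary

variable {t₀ t₁ r : ℝ} {N : ℕ} {d : ℕ → ℝ}

theorem le_mul_of_lacunary (ht₀ : 0 < t₀) (ht₁ : t₀ < t₁) (hr : r = t₁ / t₀)
    (hd : ∀ i, 1 ≤ i → i ≤ N → 0 < d i) (hratio : ∀ i, 1 ≤ i → i < N → d (i + 1) / d i > r)
    {j : ℕ} (hj : 1 ≤ j) {t : ℝ} (ht : t₀ < t * d j) :
    ∀ i ∈ Icc (j + 1) N, t₁ ≤ t * d i := by
  have hr1 : 1 < r := hr ▸ (one_lt_div ht₀).2 ht₁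
  have hstep : ∀ i, 1 ≤ i → i < N → 0 < t → r * (t * d i) < t * d (i + 1) := fun i hi hiN ht =>
    by nlinarith [(lt_div_iff₀ (hd i hi hiN.le)).1 (hratio i hi hiN)]
  intro i hi
  obtain ⟨hji, hiN⟩ := mem_Icc.1 hi
  have htpos : 0 < t := pos_of_mul_pos_left (ht₀.trans ht) (hd j hj (by omega)).le
  induction i, hji using Nat.le_induction with
  | base =>
    calc t₁ = r * t₀ := by rw [hr, div_mul_cancel₀ _ ht₀.ne']
      _ ≤ r * (t * d j) := by gcongr
      _ ≤ t * d (j + 1) := (hstep j hj (by omega) htpos).le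
  | succ i hji ih =>
    have := ih (mem_Icc.2 ⟨hji, by omega⟩) (by omega)
    nlinarith [hstep i (by omega) (by omega) htpos]

variable {f : ℝ → ℝ} {ε : ℝ}

theorem sum_Icc_weighted_ge (hf : ∀ t, 0 ≤ t → -(1 / 2) ≤ f t)
    (hf₀ : ∀ t : ℝ, 0 ≤ t → t ≤ t₀ → f t > 1 - ε) (hf₁ : ∀ t : ℝ, t₁ ≤ t → |f t| < ε)
    (ht₀ : 0 < t₀) (ht₁ : t₀ < t₁) (hr : r = t₁ / t₀)
    (hd : ∀ i, 1 ≤ i → i ≤ N → 0 < d i) (hratio : ∀ i, 1 ≤ i → i < N → d (i + 1) / d i > r) :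
    ∀ j, 1 ≤ j → j ≤ N → ∀ t : ℝ, 0 ≤ t →
      ∑ i ∈ Icc j N, (1 / 2 ^ (N - i + 1) : ℝ) * f (t * d i) ≥
        -(1 / 2 ^ (N - j + 2)) - (N - j : ℝ) * ε := by
  have hε : 0 < ε := (abs_nonneg _).trans_lt (hf₁ t₁ le_rfl)
  have hweight : ∀ i : ℕ, 0 ≤ (1 / 2 ^ (N - i + 1) : ℝ) ∧ (1 / 2 ^ (N - i + 1) : ℝ) ≤ 1 :=
    fun i => ⟨by positivity, div_le_one_of_le₀ (one_le_pow₀ one_le_two) (by positivity)⟩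
  intro j hj hjN
  induction hjN using Nat.decreasingInduction with
  | self =>
    intro t ht
    rw [Icc_self, sum_singleton, Nat.sub_self, sub_self, zero_mul, sub_zero]
    linarith [hf _ (mul_nonneg ht (hd N hj le_rfl).le)]
  | of_succ j hjN ih =>
    intro t ht
    have ih := ih (by omega) t ht
    rw [Icc_eq_cons_Ioc hjN.le, sum_cons, ← Icc_add_one_left_eq_Ioc]
    rw [show N - (j + 1) + 2 = N - j + 1 by omega, Nat.cast_add_one] at ih
    set w : ℝ := 1 / 2 ^ (N - j + 1)
    have hw : 0 ≤ w ∧ w ≤ 1 := hweight j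
    rw [show (1 / 2 ^ (N - j + 2) : ℝ) = w / 2 by rw [pow_succ]; ring]
    have hdj := hd j (by omega) hjN.le
    rcases le_or_gt (t * d j) t₀ with hsmall | hlarge
    · have hhead : w * (1 - ε) ≤ w * f (t * d j) :=
        mul_le_mul_of_nonneg_left (hf₀ _ (by positivity) hsmall).le hw.1
      linarith [mul_le_of_le_one_left hε.le hw.2]
    · have hhead : w * -(1 / 2) ≤ w * f (t * d j) :=
        mul_le_mul_of_nonneg_left (hf _ (by positivity)) hw.1
      have htail := neg_card_mul_le_sum_mul (Icc (j + 1) N) hε.le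
        (w := fun i => (1 / 2 ^ (N - i + 1) : ℝ)) (x := fun i => f (t * d i))
        (fun i _ => hweight i)
        fun i hi =>
          (abs_lt.1 (hf₁ _ (le_mul_of_lacunary ht₀ ht₁ hr hd hratio (by omega) hlarge i hi))).1.le
      rw [Nat.card_Icc, show N + 1 - (j + 1) = N - j by omega, Nat.cast_sub hjN.le] at htail
      linarith

end Lacunary

theorem bukh_claim_general (n N : ℕ) (hn : 2 ≤ n) (ε : ℝ)
    (t₀ t₁ r : ℝ) (ht₀ : 0 < t₀)
    (ht₀' : ∀ t : ℝ, 0 ≤ t → t ≤ t₀ → Omega n t > 1 - ε)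
    (ht₁ : t₀ < t₁)
    (ht₁' : ∀ t : ℝ, t₁ ≤ t → |Omega n t| < ε)
    (hr : r = t₁ / t₀)
    (d : ℕ → ℝ) (hd : ∀ i, 1 ≤ i → i ≤ N → 0 < d i)
    (hratio : ∀ i, 1 ≤ i → i < N → d (i + 1) / d i > r) :
    ∀ j, 1 ≤ j → j ≤ N → ∀ t : ℝ, 0 ≤ t →
      ∑ i ∈ Finset.Icc j N, (1 / 2 ^ (N - i + 1) : ℝ) * Omega n (t * d i) ≥
        -(1 / 2 ^ (N - j + 2)) - (N - j : ℝ) * ε :=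
  sum_Icc_weighted_ge (fun _ ht => neg_half_le_Omega hn ht) ht₀' ht₁' ht₀ ht₁ hr hd hratio

theorem bukh_claim (n N : ℕ) (hn : 2 ≤ n) (hN : 1 ≤ N) (ε : ℝ)
    (hε : ε = 1 / (N * 2 ^ (N + 1)))
    (t₀ t₁ r : ℝ) (ht₀ : 0 < t₀)
    (ht₀' : ∀ t : ℝ, 0 ≤ t → t ≤ t₀ → Omega n t > 1 - ε)
    (ht₁ : t₀ < t₁)
    (ht₁' : ∀ t : ℝ, t₁ ≤ t → |Omega n t| < ε)
    (hr : r = t₁ / t₀)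
    (d : ℕ → ℝ) (hd : ∀ i, 1 ≤ i → i ≤ N → 0 < d i)
    (hratio : ∀ i, 1 ≤ i → i < N → d (i + 1) / d i > r) :
    ∀ j, 1 ≤ j → j ≤ N → ∀ t : ℝ, 0 ≤ t →
      ∑ i ∈ Finset.Icc j N, (1 / 2 ^ (N - i + 1) : ℝ) * Omega n (t * d i) ≥
        -(1 / 2 ^ (N - j + 2)) - (N - j : ℝ) * ε :=
  bukh_claim_general n N hn ε t₀ t₁ r ht₀ ht₀' ht₁ ht₁' hr d hd hratio
end
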